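/- Let c be a configuration of the complete graph K_n with c(v) ≤ n−1 for every vertex v. If there exists an ordering v₁, v₂, …, v_n of the vertices such that c(v_i) ≥ n−i for every i ∈ {1,…,n}, then c is volatile. -/

import Mathlib

/-- Firing vertex `v` in `K_n`: remove `n-1` chips from `v`, add one chip to each other vertex. -/
def fireK (n : ℕ) (c : Fin n → ℕ) (v : Fin n) : Fin n → ℕ :=
  fun u => if u = v then c v - (n - 1) else c u + 1

/-- Configuration after firing `f 0, …, f (m-1)` in order in `K_n`. -/
def fireIterK (n : ℕ) (c : Fin n → ℕ) (f : ℕ → Fin n) : ℕ → Fin n → ℕ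
  | 0 => c
  | m + 1 => fireK n (fireIterK n c f m) (f m)

/-- A configuration of `K_n` is volatile if it admits an infinite legal firing sequence. -/
def VolatileK (n : ℕ) (c : Fin n → ℕ) : Prop :=
  ∃ f : ℕ → Fin n, ∀ m : ℕ, n - 1 ≤ fireIterK n c f m (f m)

/-- Configuration after firing a finite list of vertices in order in `K_n`. -/
def fireListK (n : ℕ) : (Fin n → ℕ) → List (Fin n) → (Fin n → ℕ)
  | c, [] => c
  | c, v :: l => fireListK n (fireK n c v) l

/-- A finite firing list in `K_n` is legal if each fired vertex has at least `n-1` chips. -/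
def LegalListK (n : ℕ) : (Fin n → ℕ) → List (Fin n) → Prop
  | _, [] => True
  | c, v :: l => n - 1 ≤ c v ∧ LegalListK n (fireK n c v) l

/-!
Fire the vertices once each, in the order `σ 0, σ 1, …, σ (n-1)`. When `σ k` is fired it has
received one chip from each of the `k` earlier firings, so it holds `c (σ k) + k ≥ n - 1` chips.
After the round every vertex has lost `n - 1` chips once and gained one chip `n - 1` times, so the
configuration is `c` again, and the round can be repeated forever.
-/

open Function

section Periodic

variable {n p : ℕ} {c : Fin n → ℕ} {f : ℕ → Fin n}

theorem fireIterK_periodic (hf : Periodic f p) (hret : fireIterK n c f p = c) :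
    Periodic (fireIterK n c f) p := by
  intro m
  induction m with
  | zero => rwa [Nat.zero_add]
  | succ m ih =>
    rw [Nat.add_right_comm]
    simp only [fireIterK, ih, hf m]

theorem volatileK_of_periodic (hp : 0 < p) (hf : Periodic f p) (hret : fireIterK n c f p = c)
    (hlegal : ∀ m < p, n - 1 ≤ fireIterK n c f m (f m)) : VolatileK n c := by
  refine ⟨f, fun m => ?_⟩
  rw [← hf.map_mod_nat m, ← (fireIterK_periodic hf hret).map_mod_nat m]
  exact hlegal _ (Nat.mod_lt m hp)

end Periodic

def roundRobin {n : ℕ} (hn : 0 < n) (σ : Equiv.Perm (Fin n)) (m : ℕ) : Fin n :=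
  σ ⟨m % n, Nat.mod_lt m hn⟩

theorem roundRobin_periodic {n : ℕ} (hn : 0 < n) (σ : Equiv.Perm (Fin n)) :
    Periodic (roundRobin hn σ) n := by
  intro m
  simp [roundRobin]

section RoundRobin

variable {n : ℕ} (hn : 0 < n) {σ : Equiv.Perm (Fin n)} {c : Fin n → ℕ}

theorem roundRobin_of_lt {k : ℕ} (hk : k < n) : roundRobin hn σ k = σ ⟨k, hk⟩ := by
  simp [roundRobin, Nat.mod_eq_of_lt hk]

/-- The truncated subtraction `c u + k - n` is exact: `u = σ i` with `i < k` was fired legally. -/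
theorem fireIterK_roundRobin (hσ : ∀ i : Fin n, n - 1 - (i : ℕ) ≤ c (σ i)) {k : ℕ} (hk : k ≤ n)
    (u : Fin n) : fireIterK n c (roundRobin hn σ) k u =
      if (σ.symm u : ℕ) < k then c u + k - n else c u + k := by
  induction k generalizing u with
  | zero => simp [fireIterK]
  | succ k ih =>
    have hkn : k < n := hk
    have hfired : n - 1 - k ≤ c (σ ⟨k, hkn⟩) := hσ ⟨k, hkn⟩
    simp only [fireIterK, fireK, roundRobin_of_lt hn hkn, ih hkn.le]
    by_cases hu : u = σ ⟨k, hkn⟩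
    · subst hu
      simp only [Equiv.symm_apply_apply, if_true, lt_irrefl, if_false, Nat.lt_succ_self]
      omega
    · have hne : (σ.symm u : ℕ) ≠ k := fun h => hu (by simp [← h])
      simp only [hu, if_false]
      have hlegal : n - 1 - (σ.symm u : ℕ) ≤ c u := by simpa using hσ (σ.symm u)
      split_ifs <;> omega

end RoundRobin

theorem stmt3_general (n : ℕ) (hn : 1 ≤ n) (c : Fin n → ℕ)
    (h : ∃ σ : Equiv.Perm (Fin n), ∀ i : Fin n, n - 1 - (i : ℕ) ≤ c (σ i)) :
    VolatileK n c := by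
  obtain ⟨σ, hσ⟩ := h
  refine volatileK_of_periodic hn (roundRobin_periodic hn σ) ?_ fun m hm => ?_
  · funext u
    rw [fireIterK_roundRobin hn hσ le_rfl, if_pos (σ.symm u).isLt]
    omega
  · rw [fireIterK_roundRobin hn hσ hm.le, roundRobin_of_lt hn hm, Equiv.symm_apply_apply,
      if_neg (lt_irrefl m)]
    have hfired : n - 1 - m ≤ c (σ ⟨m, hm⟩) := hσ ⟨m, hm⟩
    omega

/-- If `c(v) ≤ n-1` for all `v` and there is an ordering `v₁,…,v_n` of the
vertices of `K_n` with `c(v_i) ≥ n - i` (here 0-indexed: `c (σ i) ≥ n - 1 - i`), then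
`c` is volatile. -/
theorem stmt3 (n : ℕ) (hn : 1 ≤ n) (c : Fin n → ℕ) (hc : ∀ v, c v ≤ n - 1)
    (h : ∃ σ : Equiv.Perm (Fin n), ∀ i : Fin n, n - 1 - (i : ℕ) ≤ c (σ i)) :
    VolatileK n c :=
  stmt3_general n hn c h
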